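/- Let U be an admissible state (ρ > 0, 𝓔(U) > 0), v = m/ρ, and S(U) = (0, B, v, v·B). Then for any b ∈ ℝ and v*, B* ∈ ℝ³, b (S(U) · n*) ≤ (|b|/√ρ)(U · n* + |B*|²/2) - b (v* · B*), where n* = (|v*|²/2, -v*, -B*, 1). -/
import Mathlib


/-- For an admissible state U (ρ > 0, 𝓔(U) > 0), v = m/ρ, and
S(U) = (0, B, v, v·B): for any b ∈ ℝ and v*, B* ∈ ℝ³,
b (S(U)·n*) ≤ (|b|/√ρ)(U·n* + |B*|²/2) - b (v*·B*). -/
theorem source_term_bound (ρ E b : ℝ) (m B : Fin 3 → ℝ) (hρ : 0 < ρ)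
    (hE : 0 < E - ((∑ i, (m i) ^ 2) / ρ + ∑ i, (B i) ^ 2) / 2) (vs Bs : Fin 3 → ℝ) :
    b * (-(∑ i, B i * vs i) - (∑ i, (m i / ρ) * Bs i) + ∑ i, (m i / ρ) * B i)
      ≤ |b| / Real.sqrt ρ *
          (ρ * (∑ i, (vs i) ^ 2) / 2 - (∑ i, m i * vs i) - (∑ i, B i * Bs i) + E
            + (∑ i, (Bs i) ^ 2) / 2)
        - b * ∑ i, vs i * Bs i := by
  have hs : 0 < Real.sqrt ρ := Real.sqrt_pos.mpr hρ
  set s := Real.sqrt ρ with hsdef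
  have hs2 : s ^ 2 = ρ := Real.sq_sqrt hρ.le
  set d : Fin 3 → ℝ := fun i => m i / ρ - vs i with hd
  set e : Fin 3 → ℝ := fun i => B i - Bs i with he
  set X := ∑ i, d i * e i with hX
  set D := ∑ i, d i ^ 2 with hD
  set F := ∑ i, e i ^ 2 with hF
  have hDnn : 0 ≤ D := Finset.sum_nonneg fun i _ => sq_nonneg _
  have hFnn : 0 ≤ F := Finset.sum_nonneg fun i _ => sq_nonneg _
  have hCS : X ^ 2 ≤ D * F := by
    rw [hX, hD, hF, Fin.sum_univ_three, Fin.sum_univ_three, Fin.sum_univ_three]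
    nlinarith [sq_nonneg (d 0 * e 1 - d 1 * e 0), sq_nonneg (d 0 * e 2 - d 2 * e 0),
      sq_nonneg (d 1 * e 2 - d 2 * e 1)]
  -- key: s * |X| ≤ (ρ * D + F) / 2
  have hkey : s * |X| ≤ (ρ * D + F) / 2 := by
    nlinarith [hCS, sq_abs X, abs_nonneg X, hs2, hs, mul_nonneg hρ.le hDnn,
      sq_nonneg (ρ * D - F), sq_nonneg (s * |X| - (ρ * D + F) / 2), hDnn, hFnn,
      mul_pos hρ hs]
  -- energy positivity
  have hE' : 0 ≤ E - ((∑ i, (m i) ^ 2) / ρ + ∑ i, (B i) ^ 2) / 2 := hE.le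
  have h1 : b * X ≤ |b| * |X| := by
    calc b * X ≤ |b * X| := le_abs_self _
    _ = |b| * |X| := abs_mul _ _
  have h2 : |b| * |X| ≤ |b| / s * ((ρ * D + F) / 2) := by
    have : |b| * |X| = |b| / s * (s * |X|) := by
      field_simp
    rw [this]
    exact mul_le_mul_of_nonneg_left hkey (div_nonneg (abs_nonneg _) hs.le)
  have hmain : b * X ≤ |b| / s *
      ((E - ((∑ i, (m i) ^ 2) / ρ + ∑ i, (B i) ^ 2) / 2) + (ρ * D + F) / 2) := by
    have h3 : |b| / s * ((ρ * D + F) / 2) ≤ |b| / s *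
        ((E - ((∑ i, (m i) ^ 2) / ρ + ∑ i, (B i) ^ 2) / 2) + (ρ * D + F) / 2) := by
      have hb : 0 ≤ |b| / s := div_nonneg (abs_nonneg _) hs.le
      nlinarith [mul_nonneg hb hE']
    linarith [h1, h2]
  have eqL : b * (-(∑ i, B i * vs i) - (∑ i, (m i / ρ) * Bs i) + ∑ i, (m i / ρ) * B i)
      = b * X - b * ∑ i, vs i * Bs i := by
    rw [hX, hd, he]
    simp only [Fin.sum_univ_three]
    field_simp
    ring
  have eqR : ρ * (∑ i, (vs i) ^ 2) / 2 - (∑ i, m i * vs i) - (∑ i, B i * Bs i) + E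
      + (∑ i, (Bs i) ^ 2) / 2
      = (E - ((∑ i, (m i) ^ 2) / ρ + ∑ i, (B i) ^ 2) / 2) + (ρ * D + F) / 2 := by
    rw [hD, hF, hd, he]
    simp only [Fin.sum_univ_three]
    field_simp
    ring
  rw [eqL, eqR]
  linarith [hmain]
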